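/- Let 0<ρ<1 and y>1, and let P_h be the distribution with P_h(0)=(1-z)/(1+(y-1)z) and P_h(r)=y·P_h(0)·z^r for r≥1. Then for z = z(ρ,y) := 1 - (1-√(1-4ρ(1-ρ)(1-y⁻¹)))/(2(1-ρ)(1-y⁻¹)), the expected headway under P_h equals (1-ρ)/ρ, i.e. y·z/((1-z)(1+(y-1)z)) = (1-ρ)/ρ. -/

import Mathlib

/-- For `0 < ρ < 1` and `y > 1`, the fugacity
`z = z(ρ,y) = 1 - (1-√(1-4ρ(1-ρ)(1-y⁻¹)))/(2(1-ρ)(1-y⁻¹))` satisfies the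
mean-headway equation `y·z/((1-z)(1+(y-1)z)) = (1-ρ)/ρ`. -/
theorem fugacity_solves_mean_headway (ρ y : ℝ) (hρ0 : 0 < ρ) (hρ1 : ρ < 1)
    (hy : 1 < y) :
    (fun z : ℝ => y * z / ((1 - z) * (1 + (y - 1) * z)) = (1 - ρ) / ρ)
      (1 - (1 - Real.sqrt (1 - 4 * ρ * (1 - ρ) * (1 - y⁻¹))) /
        (2 * (1 - ρ) * (1 - y⁻¹))) := by
  have hy0 : (0:ℝ) < y := lt_trans one_pos hy
  have hyi0 : 0 < y⁻¹ := inv_pos.mpr hy0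
  have hyi1 : y⁻¹ < 1 := by
    rw [inv_lt_one_iff₀]; right; exact hy
  have hu0 : 0 < 1 - y⁻¹ := by linarith
  have hρ1' : 0 < 1 - ρ := by linarith
  have hD : 0 < 1 - 4 * ρ * (1 - ρ) * (1 - y⁻¹) := by
    nlinarith [sq_nonneg (2*ρ-1), mul_pos hρ0 hρ1', mul_pos (mul_pos hρ0 hρ1') hyi0]
  set s := Real.sqrt (1 - 4 * ρ * (1 - ρ) * (1 - y⁻¹)) with hsdef
  have hs0 : 0 ≤ s := Real.sqrt_nonneg _
  have hs2 : s ^ 2 = 1 - 4 * ρ * (1 - ρ) * (1 - y⁻¹) := Real.sq_sqrt hD.le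
  have hs1 : s < 1 := by
    nlinarith [mul_pos (mul_pos (mul_pos (by norm_num : (0:ℝ)<4) hρ0) hρ1') hu0]
  have hA : (0:ℝ) < 2 * (1 - ρ) * (1 - y⁻¹) := by positivity
  beta_reduce
  set z := 1 - (1 - s) / (2 * (1 - ρ) * (1 - y⁻¹)) with hzdef
  have h1z : 1 - z = (1 - s) / (2 * (1 - ρ) * (1 - y⁻¹)) := by rw [hzdef]; ring
  have h1zpos : 0 < 1 - z := by
    rw [h1z]; exact div_pos (by linarith) hA
  have hsa : 1 - 2 * (1 - ρ) * (1 - y⁻¹) < s := by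
    nlinarith [mul_pos hA (mul_pos hρ1' hyi0), hs0, hA]
  have hz0 : 0 < z := by
    rw [hzdef, sub_pos, div_lt_one hA]; linarith
  have hden : 0 < (1 - z) * (1 + (y - 1) * z) :=
    mul_pos h1zpos (by nlinarith)
  rw [div_eq_div_iff hden.ne' (ne_of_gt hρ0)]
  have hs2' : y * s ^ 2 = y - 4 * ρ * (1 - ρ) * (y - 1) := by
    rw [hs2]; field_simp
  rw [hzdef]
  have hy' : y ≠ 0 := hy0.ne'
  have hB : (2:ℝ) * (1 - ρ) * (y - 1) ≠ 0 :=
    (mul_pos (mul_pos two_pos hρ1') (by linarith)).ne'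
  rw [show (2:ℝ) * (1 - ρ) * (1 - y⁻¹) = (2 * (1 - ρ) * (y - 1)) / y by
    field_simp]
  have hy1 : y - 1 ≠ 0 := by linarith
  field_simp
  linear_combination y * hs2'
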